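/- arXiv:2512.17005 — 7 statements merged into one kernel-verified Lean document; each statement's English description precedes it below -/
import Mathlib

section
/- Let w_1,…,w_n > 0 and Λ_w = diag(w_1,…,w_n), and let κ_1,…,κ_n denote the eigenvalues of the symmetric positive definite matrix Λ_w C Λ_w. Then for every A ∈ 𝒜, tr(Aᵀ Λ_σ C Λ_w) ≤ Σ_{i=1}^n κ_i^{1/2}. -/
open Matrix

/-!
With `M = Λ_σ⁻¹ Λ_w` the objective is `tr(Aᵀ S M)` and `Λ_w C Λ_w = Mᵀ S M`. Expanding the trace
in an orthonormal eigenbasis `(vᵢ)` of `Mᵀ S M` gives `∑ᵢ ⟨A vᵢ, M vᵢ⟩_S` for the semi-inner product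
`⟨x, y⟩_S = xᵀ S y`. By Cauchy–Schwarz each term is at most `‖A vᵢ‖_S ‖M vᵢ‖_S`, where
`‖A vᵢ‖_S² = vᵢᵀ (Aᵀ S A) vᵢ = 1` and `‖M vᵢ‖_S² = vᵢᵀ (Mᵀ S M) vᵢ = κᵢ`.
-/

namespace Matrix

variable {n : Type*} [Fintype n]

theorem PosSemidef.dotProduct_mulVec_le {S : Matrix n n ℝ} (hS : S.PosSemidef) (x y : n → ℝ) :
    x ⬝ᵥ (S *ᵥ y) ≤ √(x ⬝ᵥ (S *ᵥ x)) * √(y ⬝ᵥ (S *ᵥ y)) := by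
  let := S.toSeminormedAddCommGroup hS
  let := S.toInnerProductSpace hS
  have h := real_inner_le_norm x y
  rw [@norm_eq_sqrt_re_inner ℝ, @norm_eq_sqrt_re_inner ℝ, RCLike.re_to_real,
    RCLike.re_to_real] at h
  change (S *ᵥ y) ⬝ᵥ x ≤ √((S *ᵥ x) ⬝ᵥ x) * √((S *ᵥ y) ⬝ᵥ y) at h
  simpa only [dotProduct_comm] using h

theorem mulVec_dotProduct_mulVec_mulVec (A S B : Matrix n n ℝ) (x y : n → ℝ) :
    (A *ᵥ x) ⬝ᵥ (S *ᵥ (B *ᵥ y)) = x ⬝ᵥ ((Aᵀ * S * B) *ᵥ y) := by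
  rw [← vecMul_transpose, ← dotProduct_mulVec, mulVec_mulVec, mulVec_mulVec, Matrix.mul_assoc]

variable [DecidableEq n]

theorem toMatrix_basisFun_toEuclideanLin (X : Matrix n n ℝ) :
    LinearMap.toMatrix (EuclideanSpace.basisFun n ℝ).toBasis (EuclideanSpace.basisFun n ℝ).toBasis
      (toEuclideanLin X) = X := by
  ext i j
  simp [LinearMap.toMatrix_apply, toLpLin_apply]

theorem IsHermitian.trace_eq_sum_eigenvectorBasis {K : Matrix n n ℝ} (hK : K.IsHermitian)
    (X : Matrix n n ℝ) :
    X.trace = ∑ i, hK.eigenvectorBasis i ⬝ᵥ (X *ᵥ hK.eigenvectorBasis i) := by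
  have h := LinearMap.trace_eq_sum_inner (toEuclideanLin X) hK.eigenvectorBasis
  rw [LinearMap.trace_eq_matrix_trace ℝ (EuclideanSpace.basisFun n ℝ).toBasis,
    toMatrix_basisFun_toEuclideanLin] at h
  simpa [dotProduct_comm, EuclideanSpace.inner_eq_star_dotProduct, toLpLin_apply] using h

theorem IsHermitian.dotProduct_eigenvectorBasis_self {K : Matrix n n ℝ} (hK : K.IsHermitian)
    (i : n) : ⇑(hK.eigenvectorBasis i) ⬝ᵥ ⇑(hK.eigenvectorBasis i) = 1 := by
  have h := real_inner_self_eq_norm_sq (hK.eigenvectorBasis i)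
  rw [hK.eigenvectorBasis.orthonormal.1 i, EuclideanSpace.inner_eq_star_dotProduct] at h
  simpa using h

theorem trace_transpose_mul_mul_le_sum_sqrt_eigenvalues {S A M K : Matrix n n ℝ}
    (hS : S.PosSemidef) (hA : Aᵀ * S * A = 1) (hK : K.IsHermitian) (hMK : Mᵀ * S * M = K) :
    (Aᵀ * S * M).trace ≤ ∑ i, √(hK.eigenvalues i) := by
  rw [hK.trace_eq_sum_eigenvectorBasis]
  refine Finset.sum_le_sum fun i _ => ?_
  set v : n → ℝ := ⇑(hK.eigenvectorBasis i)
  have hv : v ⬝ᵥ v = 1 := hK.dotProduct_eigenvectorBasis_self i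
  have hAv : (A *ᵥ v) ⬝ᵥ (S *ᵥ (A *ᵥ v)) = 1 := by
    rw [mulVec_dotProduct_mulVec_mulVec, hA, one_mulVec, hv]
  have hMv : (M *ᵥ v) ⬝ᵥ (S *ᵥ (M *ᵥ v)) = hK.eigenvalues i := by
    rw [mulVec_dotProduct_mulVec_mulVec, hMK, hK.mulVec_eigenvectorBasis, dotProduct_smul, hv,
      smul_eq_mul, mul_one]
  calc v ⬝ᵥ ((Aᵀ * S * M) *ᵥ v) = (A *ᵥ v) ⬝ᵥ (S *ᵥ (M *ᵥ v)) :=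
        (mulVec_dotProduct_mulVec_mulVec A S M v v).symm
    _ ≤ √((A *ᵥ v) ⬝ᵥ (S *ᵥ (A *ᵥ v))) * √((M *ᵥ v) ⬝ᵥ (S *ᵥ (M *ᵥ v))) :=
        hS.dotProduct_mulVec_le _ _
    _ = √(hK.eigenvalues i) := by rw [hAv, hMv, Real.sqrt_one, one_mul]

end Matrix

theorem stmt_0_general {n : ℕ}
    (S : Matrix (Fin n) (Fin n) ℝ) (hS : S.PosDef)
    (Ls : Matrix (Fin n) (Fin n) ℝ)
    (hLs : Ls = Matrix.diagonal (fun i => Real.sqrt (S i i)))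
    (C : Matrix (Fin n) (Fin n) ℝ) (hC : C = Ls⁻¹ * S * Ls⁻¹)
    (w : Fin n → ℝ)
    (Lw : Matrix (Fin n) (Fin n) ℝ) (hLw : Lw = Matrix.diagonal w)
    (hK : (Lw * C * Lw).PosDef)
    (A : Matrix (Fin n) (Fin n) ℝ) (hA : Aᵀ * S * A = 1) :
    (Aᵀ * Ls * C * Lw).trace ≤ ∑ i, Real.sqrt (hK.1.eigenvalues i) := by
  have hLs_det : IsUnit Ls.det := by
    rw [hLs, det_diagonal]
    exact (Finset.prod_pos fun i _ => Real.sqrt_pos.mpr hS.diag_pos).ne'.isUnit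
  have hLs_symm : Lsᵀ = Ls := by rw [hLs, diagonal_transpose]
  have hLw_symm : Lwᵀ = Lw := by rw [hLw, diagonal_transpose]
  have hobj : Aᵀ * Ls * C * Lw = Aᵀ * S * (Ls⁻¹ * Lw) := by
    rw [hC]
    simp only [Matrix.mul_assoc, mul_nonsing_inv_cancel_left _ _ hLs_det]
  have hMK : (Ls⁻¹ * Lw)ᵀ * S * (Ls⁻¹ * Lw) = Lw * C * Lw := by
    rw [transpose_mul, transpose_nonsing_inv, hLs_symm, hLw_symm, hC]
    simp only [Matrix.mul_assoc]
  rw [hobj]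
  exact trace_transpose_mul_mul_le_sum_sqrt_eigenvalues hS.posSemidef hA hK.1 hMK

/-- **Weighted OASIS upper bound.** For any identification matrix `A` in
`𝒜 = {A : Aᵀ Σ A = I}`, the weighted-correlation objective
`tr(Aᵀ Λ_σ C Λ_w)` is bounded by the sum of the square roots of the
eigenvalues of `Λ_w C Λ_w`. -/
theorem stmt_0 {n : ℕ} (hn : 1 ≤ n)
    (S : Matrix (Fin n) (Fin n) ℝ) (hS : S.PosDef)
    (Ls : Matrix (Fin n) (Fin n) ℝ)
    (hLs : Ls = Matrix.diagonal (fun i => Real.sqrt (S i i)))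
    (C : Matrix (Fin n) (Fin n) ℝ) (hC : C = Ls⁻¹ * S * Ls⁻¹)
    (w : Fin n → ℝ) (hw : ∀ i, 0 < w i)
    (Lw : Matrix (Fin n) (Fin n) ℝ) (hLw : Lw = Matrix.diagonal w)
    (hK : (Lw * C * Lw).PosDef)
    (A : Matrix (Fin n) (Fin n) ℝ) (hA : Aᵀ * S * A = 1) :
    (Aᵀ * Ls * C * Lw).trace ≤ ∑ i, Real.sqrt (hK.1.eigenvalues i) :=
  stmt_0_general S hS Ls hLs C hC w Lw hLw hK A hA
end

section
/- Let w_1,…,w_n > 0, Λ_w = diag(w_1,…,w_n), and let κ_1,…,κ_n denote the eigenvalues of Λ_w C Λ_w. The matrix A_* = Λ_σ^{-1} Λ_w (Λ_w C Λ_w)^{-1/2} satisfies A_*ᵀ Σ A_* = I_n (i.e. A_* ∈ 𝒜) and tr(A_*ᵀ Λ_σ C Λ_w) = Σ_{i=1}^n κ_i^{1/2}. -/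
/-!
Write `A_* = M Q⁻¹` with `M = Λ_σ⁻¹ Λ_w` and `Q = (Λ_w C Λ_w)^{1/2}`, a symmetric matrix.
Both `Mᵀ Σ M` and `Mᵀ Λ_σ C Λ_w` equal `Λ_w C Λ_w = Q²`, so `A_*ᵀ Σ A_* = Q⁻¹ Q² Q⁻¹ = I` and
`A_*ᵀ Λ_σ C Λ_w = Q⁻¹ Q² = Q`, whose trace is `Σ κ_i^{1/2}` by the spectral theorem.
-/

open Matrix BigOperators

namespace Matrix

section Whitening

variable {m n k R : Type*} [Fintype m] [Fintype n] [DecidableEq n] [CommRing R]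
  {M : Matrix m n R} {Q : Matrix n n R}

theorem transpose_mul_inv_mul_eq_of_mul_eq (hQT : Qᵀ = Q) (hQ : IsUnit Q)
    {N : Matrix m k R} {P : Matrix n k R} (h : Mᵀ * N = Q * P) : (M * Q⁻¹)ᵀ * N = P := by
  rw [transpose_mul, transpose_nonsing_inv, hQT, Matrix.mul_assoc, h, ← Matrix.mul_assoc,
    nonsing_inv_mul Q ((isUnit_iff_isUnit_det Q).mp hQ), Matrix.one_mul]

theorem transpose_mul_inv_mul_mul_inv_eq_one (hQT : Qᵀ = Q) (hQ : IsUnit Q)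
    {S : Matrix m m R} (h : Mᵀ * S * M = Q * Q) : (M * Q⁻¹)ᵀ * S * (M * Q⁻¹) = 1 :=
  calc (M * Q⁻¹)ᵀ * S * (M * Q⁻¹) = (M * Q⁻¹)ᵀ * (S * M) * Q⁻¹ := by
        simp only [Matrix.mul_assoc]
    _ = Q * Q⁻¹ := by
        rw [transpose_mul_inv_mul_eq_of_mul_eq hQT hQ (by rw [← Matrix.mul_assoc, h])]
    _ = 1 := mul_nonsing_inv Q ((isUnit_iff_isUnit_det Q).mp hQ)

end Whitening

section SpectralSqrt

open scoped ComplexOrder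

variable {n 𝕜 : Type*} [Fintype n] [DecidableEq n] [RCLike 𝕜] {A : Matrix n n 𝕜}

theorem IsHermitian.trace_cfc (hA : A.IsHermitian) (f : ℝ → ℝ) :
    (hA.cfc f).trace = ∑ i, (f (hA.eigenvalues i) : 𝕜) := by
  rw [IsHermitian.cfc, Unitary.conjStarAlgAut_apply, trace_mul_cycle, Unitary.coe_star_mul_self,
    Matrix.one_mul, trace_diagonal]
  rfl

theorem PosSemidef.cfc_sqrt_mul_self (hA : A.PosSemidef) :
    cfc Real.sqrt A * cfc Real.sqrt A = A := by
  rw [← cfc_mul Real.sqrt Real.sqrt A]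
  conv_rhs => rw [← cfc_id' ℝ A hA.1]
  refine cfc_congr fun x hx => ?_
  rw [hA.1.spectrum_real_eq_range_eigenvalues] at hx
  obtain ⟨i, rfl⟩ := hx
  exact Real.mul_self_sqrt (hA.eigenvalues_nonneg i)

theorem PosDef.isUnit_cfc_sqrt (hA : A.PosDef) : IsUnit (cfc Real.sqrt A) := by
  have h := hA.isUnit
  rw [← hA.posSemidef.cfc_sqrt_mul_self] at h
  exact ((Commute.refl _).isUnit_mul_iff.mp h).1

theorem transpose_cfc (A : Matrix n n ℝ) (f : ℝ → ℝ) : (cfc f A)ᵀ = cfc f A := by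
  rw [← conjTranspose_eq_transpose_of_trivial]
  exact IsSelfAdjoint.cfc

end SpectralSqrt

end Matrix

theorem stmt_1_general {n : ℕ}
    (S : Matrix (Fin n) (Fin n) ℝ) (hS : S.PosDef)
    (Ls : Matrix (Fin n) (Fin n) ℝ)
    (hLs : Ls = Matrix.diagonal (fun i => Real.sqrt (S i i)))
    (C : Matrix (Fin n) (Fin n) ℝ) (hC : C = Ls⁻¹ * S * Ls⁻¹)
    (w : Fin n → ℝ)
    (Lw : Matrix (Fin n) (Fin n) ℝ) (hLw : Lw = Matrix.diagonal w)
    (hK : (Lw * C * Lw).PosDef)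
    (Astar : Matrix (Fin n) (Fin n) ℝ)
    (hAstar : Astar = Ls⁻¹ * Lw * (hK.posSemidef.1.eigenvectorUnitary * Matrix.diagonal (((↑) : ℝ → ℝ) ∘ (Real.sqrt ·) ∘ hK.posSemidef.1.eigenvalues) *
      (star hK.posSemidef.1.eigenvectorUnitary : Matrix (Fin n) (Fin n) ℝ))⁻¹) :
    Astarᵀ * S * Astar = 1 ∧
    (Astarᵀ * Ls * C * Lw).trace = ∑ i, Real.sqrt (hK.1.eigenvalues i) := by
  change Astar = Ls⁻¹ * Lw * (hK.1.cfc Real.sqrt)⁻¹ at hAstar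
  rw [← hK.1.cfc_eq] at hAstar
  set Q := cfc Real.sqrt (Lw * C * Lw) with hQ
  have hQT : Qᵀ = Q := transpose_cfc _ _
  have hQQ : Q * Q = Lw * C * Lw := hK.posSemidef.cfc_sqrt_mul_self
  have hLsLs : Ls⁻¹ * Ls = 1 := by
    refine nonsing_inv_mul Ls ?_
    rw [hLs, det_diagonal]
    exact (Finset.prod_pos fun i _ => Real.sqrt_pos.mpr hS.diag_pos).ne'.isUnit
  have hMT : (Ls⁻¹ * Lw)ᵀ = Lw * Ls⁻¹ := by
    rw [transpose_mul, transpose_nonsing_inv, hLs, hLw, diagonal_transpose, diagonal_transpose]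
  have hAstarQ : Astarᵀ * Ls * C * Lw = Q := by
    rw [hAstar, Matrix.mul_assoc, Matrix.mul_assoc]
    refine transpose_mul_inv_mul_eq_of_mul_eq hQT hK.isUnit_cfc_sqrt ?_
    rw [hMT, hQQ]
    simp only [Matrix.mul_assoc]
    rw [← Matrix.mul_assoc Ls⁻¹, hLsLs, Matrix.one_mul]
  refine ⟨?_, ?_⟩
  · rw [hAstar]
    refine transpose_mul_inv_mul_mul_inv_eq_one hQT hK.isUnit_cfc_sqrt ?_
    rw [hMT, hQQ, hC]
    simp only [Matrix.mul_assoc]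
  · rw [hAstarQ, hQ, hK.1.cfc_eq, IsHermitian.trace_cfc]
    rfl

/-- **Weighted OASIS attainment.** The matrix `A_* = Λ_σ⁻¹ Λ_w (Λ_w C Λ_w)^{-1/2}`
belongs to `𝒜` (i.e. `A_*ᵀ Σ A_* = I`) and attains the value
`tr(A_*ᵀ Λ_σ C Λ_w) = Σ_i κ_i^{1/2}`, where `κ_i` are the eigenvalues of
`Λ_w C Λ_w`. -/
theorem stmt_1 {n : ℕ} (hn : 1 ≤ n)
    (S : Matrix (Fin n) (Fin n) ℝ) (hS : S.PosDef)
    (Ls : Matrix (Fin n) (Fin n) ℝ)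
    (hLs : Ls = Matrix.diagonal (fun i => Real.sqrt (S i i)))
    (C : Matrix (Fin n) (Fin n) ℝ) (hC : C = Ls⁻¹ * S * Ls⁻¹)
    (w : Fin n → ℝ) (hw : ∀ i, 0 < w i)
    (Lw : Matrix (Fin n) (Fin n) ℝ) (hLw : Lw = Matrix.diagonal w)
    (hK : (Lw * C * Lw).PosDef)
    (Astar : Matrix (Fin n) (Fin n) ℝ)
    (hAstar : Astar = Ls⁻¹ * Lw * (hK.posSemidef.1.eigenvectorUnitary * Matrix.diagonal (((↑) : ℝ → ℝ) ∘ (Real.sqrt ·) ∘ hK.posSemidef.1.eigenvalues) *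
      (star hK.posSemidef.1.eigenvectorUnitary : Matrix (Fin n) (Fin n) ℝ))⁻¹) :
    Astarᵀ * S * Astar = 1 ∧
    (Astarᵀ * Ls * C * Lw).trace = ∑ i, Real.sqrt (hK.1.eigenvalues i) :=
  stmt_1_general S hS Ls hLs C hC w Lw hLw hK Astar hAstar
end

section
/- Let w_1,…,w_n > 0, Λ_w = diag(w_1,…,w_n), and let κ_1,…,κ_n denote the eigenvalues of Λ_w C Λ_w. If A ∈ 𝒜 satisfies tr(Aᵀ Λ_σ C Λ_w) = Σ_{i=1}^n κ_i^{1/2}, then A = Λ_σ^{-1} Λ_w (Λ_w C Λ_w)^{-1/2}; that is, the maximizer of the weighted-correlation objective over 𝒜 is unique. -/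
open Matrix BigOperators

open scoped ComplexOrder in
/-- The square root of a positive semidefinite matrix, as defined in the older Mathlib
(`Matrix.PosSemidef.sqrt`, since removed). -/
noncomputable def Matrix.PosSemidef.sqrt {m 𝕜 : Type*} [Fintype m] [DecidableEq m] [RCLike 𝕜]
    {A : Matrix m m 𝕜} (hA : A.PosSemidef) : Matrix m m 𝕜 :=
  hA.1.eigenvectorUnitary.1 * diagonal ((↑) ∘ (√·) ∘ hA.1.eigenvalues) *
    (star hA.1.eigenvectorUnitary : Matrix m m 𝕜)

/-!
Put `B = Λ_σ A`, so that `Bᵀ C B = 1`, and `N = Bᵀ C Λ_w`. Then `Nᵀ N = K := Λ_w C Λ_w`, so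
`U = N K^{-1/2}` is orthogonal, and the hypothesis reads `tr (U K^{1/2}) = tr K^{1/2}`. In this
equality case of `tr (U R) ≤ tr R` the orthogonal factor is the identity, hence `N = K^{1/2}`;
since `B N = Λ_w`, this gives `B = Λ_w K^{-1/2}`.
-/

namespace Matrix

section Sqrt

open scoped ComplexOrder

variable {m 𝕜 : Type*} [Fintype m] [DecidableEq m] [RCLike 𝕜] {A : Matrix m m 𝕜}

theorem PosSemidef.sqrt_eq_conjStarAlgAut (hA : A.PosSemidef) :
    hA.sqrt = Unitary.conjStarAlgAut 𝕜 _ hA.1.eigenvectorUnitary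
      (diagonal ((↑) ∘ (√·) ∘ hA.1.eigenvalues)) :=
  rfl

theorem PosSemidef.sqrt_mul_self (hA : A.PosSemidef) : hA.sqrt * hA.sqrt = A := by
  rw [hA.sqrt_eq_conjStarAlgAut, ← map_mul, diagonal_mul_diagonal]
  conv_rhs => rw [hA.1.spectral_theorem]
  congr 2
  funext i
  simp [← RCLike.ofReal_mul, Real.mul_self_sqrt (hA.eigenvalues_nonneg i)]

theorem PosSemidef.posSemidef_sqrt (hA : A.PosSemidef) : hA.sqrt.PosSemidef := by
  rw [hA.sqrt_eq_conjStarAlgAut, Unitary.conjStarAlgAut_apply,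
    (Unitary.isUnit_coe).posSemidef_star_right_conjugate_iff]
  exact PosSemidef.diagonal fun i => by simp [Real.sqrt_nonneg]

theorem PosSemidef.trace_sqrt (hA : A.PosSemidef) :
    hA.sqrt.trace = ∑ i, (√(hA.1.eigenvalues i) : 𝕜) := by
  rw [hA.sqrt_eq_conjStarAlgAut, Unitary.conjStarAlgAut_apply, trace_mul_cycle,
    Unitary.coe_star_mul_self, one_mul, trace_diagonal]
  rfl

end Sqrt

section Real

variable {m : Type*} [Fintype m] [DecidableEq m]

theorem PosSemidef.transpose_sqrt {R : Matrix m m ℝ} (hR : R.PosSemidef) :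
    hR.sqrtᵀ = hR.sqrt := by
  simpa only [conjTranspose_eq_transpose_of_trivial] using hR.posSemidef_sqrt.1.eq

theorem PosDef.isUnit_sqrt {R : Matrix m m ℝ} (hR : R.PosDef) : IsUnit hR.posSemidef.sqrt := by
  have hRunit : IsUnit (hR.posSemidef.sqrt * hR.posSemidef.sqrt) := by
    rw [hR.posSemidef.sqrt_mul_self]
    exact hR.isUnit
  exact isUnit_of_mul_isUnit_left hRunit

theorem PosDef.posDef_sqrt {R : Matrix m m ℝ} (hR : R.PosDef) : hR.posSemidef.sqrt.PosDef :=
  hR.posSemidef.posSemidef_sqrt.posDef_iff_isUnit.mpr hR.isUnit_sqrt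

/-- Equality case of `tr (U R) ≤ tr R` for orthogonal `U` and positive definite `R`: with
`T = R^{1/2}`, the Frobenius norm `‖T - U T‖²` equals `2 (tr R - tr (U R))`. -/
theorem PosDef.eq_one_of_trace_mul_eq_trace {R U : Matrix m m ℝ} (hR : R.PosDef)
    (hU : Uᵀ * U = 1) (htr : (U * R).trace = R.trace) : U = 1 := by
  set T := hR.posSemidef.sqrt
  have hTT : T * T = R := hR.posSemidef.sqrt_mul_self
  have hT : Tᵀ = T := hR.posSemidef.transpose_sqrt
  have hRT : Rᵀ = R := by simpa only [conjTranspose_eq_transpose_of_trivial] using hR.1.eq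
  have hgram : (T - U * T)ᵀ * (T - U * T) = T * T + T * T - T * U * T - T * Uᵀ * T := by
    have hUU : T * Uᵀ * (U * T) = T * T := by
      rw [Matrix.mul_assoc, ← Matrix.mul_assoc Uᵀ, hU, Matrix.one_mul]
    rw [transpose_sub, transpose_mul, hT, Matrix.sub_mul, Matrix.mul_sub, Matrix.mul_sub, hUU]
    noncomm_ring
  have hTUT : (T * U * T).trace = (U * R).trace := by
    rw [trace_mul_cycle, hTT, trace_mul_comm]
  have hTUtT : (T * Uᵀ * T).trace = (U * R).trace := by
    rw [trace_mul_cycle, hTT, ← trace_transpose, transpose_mul, transpose_transpose, hRT]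
  have hzero : ((T - U * T)ᴴ * (T - U * T)).trace = 0 := by
    rw [conjTranspose_eq_transpose_of_trivial, hgram, trace_sub, trace_sub, trace_add, hTT, hTUT,
      hTUtT, htr]
    ring
  have hUT : U * T = 1 * T := by
    rw [Matrix.one_mul, eq_comm, ← sub_eq_zero]
    exact trace_conjTranspose_mul_self_eq_zero_iff.mp hzero
  exact hR.isUnit_sqrt.mul_right_cancel hUT

theorem PosDef.eq_of_transpose_mul_self_eq_of_trace_eq {R N : Matrix m m ℝ} (hR : R.PosDef)
    (hN : Nᵀ * N = R * R) (htr : N.trace = R.trace) : N = R := by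
  have hRR : R⁻¹ * R = 1 := nonsing_inv_mul R ((isUnit_iff_isUnit_det R).mp hR.isUnit)
  have hRT : Rᵀ = R := by simpa only [conjTranspose_eq_transpose_of_trivial] using hR.1.eq
  have hNR : N * R⁻¹ * R = N := by rw [Matrix.mul_assoc, hRR, Matrix.mul_one]
  have horth : (N * R⁻¹)ᵀ * (N * R⁻¹) = 1 := by
    rw [transpose_mul, transpose_nonsing_inv, hRT, Matrix.mul_assoc, ← Matrix.mul_assoc Nᵀ, hN,
      ← Matrix.mul_assoc, ← Matrix.mul_assoc, hRR, Matrix.one_mul,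
      mul_nonsing_inv R ((isUnit_iff_isUnit_det R).mp hR.isUnit)]
  have hU := hR.eq_one_of_trace_mul_eq_trace horth (by rw [hNR, htr])
  rw [← hNR, hU, Matrix.one_mul]

theorem eq_mul_inv_sqrt_of_trace_eq_trace_sqrt {W C B : Matrix m m ℝ} (hW : Wᵀ = W)
    (hK : (W * C * W).PosDef) (hB : Bᵀ * C * B = 1)
    (htr : (Bᵀ * C * W).trace = hK.posSemidef.sqrt.trace) :
    B = W * hK.posSemidef.sqrt⁻¹ := by
  set R := hK.posSemidef.sqrt
  have hBB : B * (Bᵀ * C) = 1 := mul_eq_one_comm.mp hB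
  have hKT : (W * C * W)ᵀ = W * C * W := by
    simpa only [conjTranspose_eq_transpose_of_trivial] using hK.1.eq
  have hgram : (Bᵀ * C * W)ᵀ * (Bᵀ * C * W) = R * R := by
    rw [hK.posSemidef.sqrt_mul_self, ← hKT]
    simp only [transpose_mul, transpose_transpose, hW, Matrix.mul_assoc]
    rw [← Matrix.mul_assoc Bᵀ, ← Matrix.mul_assoc B, hBB, Matrix.one_mul]
  have hN : Bᵀ * C * W = R := hK.posDef_sqrt.eq_of_transpose_mul_self_eq_of_trace_eq hgram htr
  have hBR : B * R = W := by
    rw [← hN, ← Matrix.mul_assoc, ← Matrix.mul_assoc, Matrix.mul_assoc B, hBB, Matrix.one_mul]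
  rw [← hBR, Matrix.mul_assoc, mul_nonsing_inv R ((isUnit_iff_isUnit_det R).mp hK.isUnit_sqrt),
    Matrix.mul_one]

end Real

end Matrix

theorem stmt_2_general {n : ℕ}
    (S : Matrix (Fin n) (Fin n) ℝ) (hS : S.PosDef)
    (Ls : Matrix (Fin n) (Fin n) ℝ)
    (hLs : Ls = Matrix.diagonal (fun i => Real.sqrt (S i i)))
    (C : Matrix (Fin n) (Fin n) ℝ) (hC : C = Ls⁻¹ * S * Ls⁻¹)
    (w : Fin n → ℝ)
    (Lw : Matrix (Fin n) (Fin n) ℝ) (hLw : Lw = Matrix.diagonal w)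
    (hK : (Lw * C * Lw).PosDef)
    (A : Matrix (Fin n) (Fin n) ℝ) (hA : Aᵀ * S * A = 1)
    (hmax : (Aᵀ * Ls * C * Lw).trace = ∑ i, Real.sqrt (hK.1.eigenvalues i)) :
    A = Ls⁻¹ * Lw * (hK.posSemidef.sqrt)⁻¹ := by
  have hLsT : Lsᵀ = Ls := by rw [hLs, diagonal_transpose]
  have hLs_det : IsUnit Ls.det := by
    rw [hLs, det_diagonal]
    exact (Finset.prod_pos fun i _ => Real.sqrt_pos.mpr (hS.diag_pos (i := i))).ne'.isUnit
  have hB : (Ls * A)ᵀ * C * (Ls * A) = 1 := by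
    rw [transpose_mul, hLsT, hC]
    simpa only [Matrix.mul_assoc, mul_nonsing_inv_cancel_left _ _ hLs_det,
      nonsing_inv_mul_cancel_left _ _ hLs_det] using hA
  have htr : ((Ls * A)ᵀ * C * Lw).trace = hK.posSemidef.sqrt.trace := by
    rw [transpose_mul, hLsT, hK.posSemidef.trace_sqrt]
    exact hmax
  have hLsA := eq_mul_inv_sqrt_of_trace_eq_trace_sqrt (by rw [hLw, diagonal_transpose]) hK hB htr
  rw [Matrix.mul_assoc, ← hLsA, nonsing_inv_mul_cancel_left _ _ hLs_det]

/-- **Weighted OASIS uniqueness.** If `A ∈ 𝒜` attains the maximal value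
`tr(Aᵀ Λ_σ C Λ_w) = Σ_i κ_i^{1/2}` of the weighted-correlation objective,
then `A = Λ_σ⁻¹ Λ_w (Λ_w C Λ_w)^{-1/2}`. -/
theorem stmt_2 {n : ℕ} (hn : 1 ≤ n)
    (S : Matrix (Fin n) (Fin n) ℝ) (hS : S.PosDef)
    (Ls : Matrix (Fin n) (Fin n) ℝ)
    (hLs : Ls = Matrix.diagonal (fun i => Real.sqrt (S i i)))
    (C : Matrix (Fin n) (Fin n) ℝ) (hC : C = Ls⁻¹ * S * Ls⁻¹)
    (w : Fin n → ℝ) (hw : ∀ i, 0 < w i)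
    (Lw : Matrix (Fin n) (Fin n) ℝ) (hLw : Lw = Matrix.diagonal w)
    (hK : (Lw * C * Lw).PosDef)
    (A : Matrix (Fin n) (Fin n) ℝ) (hA : Aᵀ * S * A = 1)
    (hmax : (Aᵀ * Ls * C * Lw).trace = ∑ i, Real.sqrt (hK.1.eigenvalues i)) :
    A = Ls⁻¹ * Lw * (hK.posSemidef.sqrt)⁻¹ :=
  stmt_2_general S hS Ls hLs C hC w Lw hLw hK A hA hmax
end

section
/- Let L be the unique lower triangular matrix with positive diagonal entries satisfying L Lᵀ = Σ, and let A_c = (Lᵀ)^{-1}, with columns a_1,…,a_n. Then for each j ∈ {1,…,n}: (i) a_jᵀ Σ a_j = 1 and a_jᵀ Σ a_i = 0 for all i < j; and (ii) for every a ∈ ℝ^n with aᵀ Σ a = 1 and aᵀ Σ a_i = 0 for all i < j, one has aᵀ Σ e_j ≤ a_jᵀ Σ e_j, where e_j is the j-th standard basis vector. That is, the j-th column of the Cholesky-based identification matrix maximizes the correlation corr(aᵀε, ε_j) = aᵀ Σ e_j / σ_j subject to unit variance and orthogonality to the previously determined structural shocks. -/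
open Matrix BigOperators

/-- **Cholesky characterization.** Let `Σ = L Lᵀ` with `L` lower triangular with
positive diagonal, and `A_c = (Lᵀ)⁻¹` with columns `a_1, …, a_n`. Then for each `j`:
(i) `a_jᵀ Σ a_j = 1` and `a_jᵀ Σ a_i = 0` for `i < j`; (ii) among all `a` with
`aᵀ Σ a = 1` and `aᵀ Σ a_i = 0` for `i < j`, the column `a_j` maximizes
`aᵀ Σ e_j` (equivalently the correlation `corr(aᵀε, ε_j)`). -/
theorem stmt_4 {n : ℕ} (hn : 1 ≤ n)
    (S : Matrix (Fin n) (Fin n) ℝ) (hS : S.PosDef)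
    (L : Matrix (Fin n) (Fin n) ℝ)
    (hLtri : ∀ i j : Fin n, i < j → L i j = 0)
    (hLdiag : ∀ i : Fin n, 0 < L i i)
    (hchol : L * Lᵀ = S)
    (Ac : Matrix (Fin n) (Fin n) ℝ) (hAc : Ac = (Lᵀ)⁻¹)
    (j : Fin n) :
    (fun i => Ac i j) ⬝ᵥ (S *ᵥ fun i => Ac i j) = 1 ∧
    (∀ i : Fin n, i < j → (fun k => Ac k j) ⬝ᵥ (S *ᵥ fun k => Ac k i) = 0) ∧
    (∀ a : Fin n → ℝ, a ⬝ᵥ (S *ᵥ a) = 1 →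
      (∀ i : Fin n, i < j → a ⬝ᵥ (S *ᵥ fun k => Ac k i) = 0) →
      a ⬝ᵥ (S *ᵥ Pi.single j 1) ≤ (fun k => Ac k j) ⬝ᵥ (S *ᵥ Pi.single j 1)) := by
  -- L is invertible
  have hdetS : S.det ≠ 0 := ne_of_gt hS.det_pos
  have hdetL : Lᵀ.det ≠ 0 := by
    intro h
    apply hdetS
    rw [← hchol, Matrix.det_mul, h, mul_zero]
  have hinv : Lᵀ * Ac = 1 := by rw [hAc, Matrix.mul_nonsing_inv _ (isUnit_iff_ne_zero.mpr hdetL)]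
  -- key rewriting: a ⬝ᵥ (S *ᵥ x) = (Lᵀ *ᵥ a) ⬝ᵥ (Lᵀ *ᵥ x)
  have key : ∀ a x : Fin n → ℝ, a ⬝ᵥ (S *ᵥ x) = (Lᵀ *ᵥ a) ⬝ᵥ (Lᵀ *ᵥ x) := by
    intro a x
    rw [← hchol, ← Matrix.mulVec_mulVec, Matrix.dotProduct_mulVec,
      ← Matrix.mulVec_transpose]
  -- column of Ac maps to basis vector
  have hcol : ∀ i : Fin n, Lᵀ *ᵥ (fun k => Ac k i) = Pi.single i 1 := by
    intro i
    have : (fun k => Ac k i) = Ac *ᵥ Pi.single i 1 := by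
      funext k; simp [Matrix.mulVec_single]
    rw [this, Matrix.mulVec_mulVec, hinv, Matrix.one_mulVec]
  have hej : Lᵀ *ᵥ (Pi.single j 1 : Fin n → ℝ) = fun k => L j k := by
    funext k
    show (Lᵀ *ᵥ Pi.single j 1) k = _
    rw [Matrix.mulVec_single]; simp
  refine ⟨?_, ?_, ?_⟩
  · rw [key, hcol, dotProduct_single, Pi.single_eq_same, mul_one]
  · intro i hij
    rw [key, hcol, hcol, dotProduct_single, mul_one, Pi.single_eq_of_ne hij.ne]
  · intro a ha horth
    set b := Lᵀ *ᵥ a with hb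
    have hbb : b ⬝ᵥ b = 1 := by rw [← ha, key]
    have hbi : ∀ i : Fin n, i < j → b i = 0 := by
      intro i hij
      have := horth i hij
      rw [key, hcol, dotProduct_single, mul_one] at this
      exact this
    have hobj : a ⬝ᵥ (S *ᵥ Pi.single j 1) = b j * L j j := by
      rw [key, hej]
      show ∑ k, b k * L j k = b j * L j j
      apply Finset.sum_eq_single
      · intro k _ hk
        rcases lt_or_gt_of_ne hk with h | h
        · rw [hbi k h, zero_mul]
        · rw [hLtri j k h, mul_zero]
      · intro h; exact absurd (Finset.mem_univ j) h
    have hobj2 : (fun k => Ac k j) ⬝ᵥ (S *ᵥ Pi.single j 1) = L j j := by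
      rw [key, hcol, hej, single_dotProduct, one_mul]
    rw [hobj, hobj2]
    have hbj2 : b j * b j ≤ 1 := by
      rw [← hbb]
      have : ∀ k ∈ Finset.univ, (0:ℝ) ≤ b k * b k := fun k _ => mul_self_nonneg _
      calc b j * b j ≤ ∑ k, b k * b k := Finset.single_le_sum this (Finset.mem_univ j)
        _ = b ⬝ᵥ b := rfl
    nlinarith [hLdiag j, sq_nonneg (b j - 1)]
end

section
/- Fix n ≥ 1. There exist δ > 0 and c > 0 such that for every correlation matrix C ∈ ℝ^{n×n} with ‖C − I_n‖_F < δ, the unique lower triangular matrix L with positive diagonal entries satisfying L Lᵀ = C obeys |(1/n)·tr(L) − (1 − d(C)/4)| ≤ c·‖C − I_n‖_F³. That is, the average correlation ρ̄_c = (1/n)·tr(L) achieved by Cholesky identification satisfies ρ̄_c = 1 − d(C)/4 + O(‖C − I_n‖³) as C → I_n. -/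
open Matrix BigOperators

private lemma split_sum {n : ℕ} (i : Fin n) (f : Fin n → ℝ) :
    ∑ k, f k = (∑ k ∈ Finset.Iio i, f k) + f i + ∑ k ∈ Finset.Ioi i, f k := by
  have h1 : (Finset.univ : Finset (Fin n)) = (Finset.Iio i ∪ {i}) ∪ Finset.Ioi i := by
    ext k
    simp only [Finset.mem_univ, Finset.mem_union, Finset.mem_Iio, Finset.mem_Ioi,
      Finset.mem_singleton, Fin.lt_def, Fin.ext_iff, true_iff]
    omega
  have d1 : Disjoint (Finset.Iio i) ({i} : Finset (Fin n)) := by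
    simp only [Finset.disjoint_left, Finset.mem_Iio, Finset.mem_singleton]
    intro a h h'; exact absurd (h'.symm ▸ h) (lt_irrefl i)
  have d2 : Disjoint (Finset.Iio i ∪ {i}) (Finset.Ioi i) := by
    simp only [Finset.disjoint_left, Finset.mem_union, Finset.mem_Iio, Finset.mem_Ioi,
      Finset.mem_singleton]
    rintro a (h | rfl) h' <;> [exact absurd (h.trans h') (lt_irrefl a); exact lt_irrefl a h']
  rw [h1, Finset.sum_union d2, Finset.sum_union d1, Finset.sum_singleton]

private lemma swap_sum {n : ℕ} (f : Fin n → Fin n → ℝ) :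
    ∑ i, ∑ j ∈ Finset.Ioi i, f i j = ∑ j, ∑ i ∈ Finset.Iio j, f i j := by
  rw [Finset.sum_sigma', Finset.sum_sigma']
  refine Finset.sum_nbij' (fun x => ⟨x.2, x.1⟩) (fun x => ⟨x.2, x.1⟩) ?_ ?_
    (fun _ _ => rfl) (fun _ _ => rfl) (fun _ _ => rfl) <;>
  · rintro ⟨a, b⟩ h
    simp only [Finset.mem_sigma, Finset.mem_univ, Finset.mem_Ioi, Finset.mem_Iio, true_and] at h ⊢
    exact h

private lemma card_Iio_le {n : ℕ} (j : Fin n) : ((Finset.Iio j).card : ℝ) ≤ n := by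
  have h := Finset.card_le_univ (Finset.Iio j)
  rw [Fintype.card_fin] at h
  exact_mod_cast h

/-- Frobenius norm of a real square matrix. -/
noncomputable def frobNorm {n : ℕ} (A : Matrix (Fin n) (Fin n) ℝ) : ℝ :=
  Real.sqrt (∑ i, ∑ j, (A i j) ^ 2)

/-- `d(C) = (1/n)·‖C − I‖_F²`. -/
noncomputable def dC {n : ℕ} (C : Matrix (Fin n) (Fin n) ℝ) : ℝ :=
  (1 / (n : ℝ)) * frobNorm (C - 1) ^ 2

set_option maxHeartbeats 4000000 in
/-- **Cholesky expansion near the identity.** For every fixed `n ≥ 1` there are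
`δ, c > 0` such that for any correlation matrix `C` with `‖C − I‖_F < δ`, the
lower triangular Cholesky factor `L` (positive diagonal, `L Lᵀ = C`) satisfies
`|(1/n)·tr(L) − (1 − d(C)/4)| ≤ c·‖C − I‖_F³`; i.e.
`ρ̄_c = 1 − d(C)/4 + O(‖C − I‖³)`. -/
theorem stmt_13 (n : ℕ) (hn : 1 ≤ n) :
    ∃ δ > (0 : ℝ), ∃ c > (0 : ℝ), ∀ C : Matrix (Fin n) (Fin n) ℝ,
      C.PosDef → (∀ i, C i i = 1) → frobNorm (C - 1) < δ →
      ∀ L : Matrix (Fin n) (Fin n) ℝ,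
        (∀ i j : Fin n, i < j → L i j = 0) → (∀ i, 0 < L i i) → L * Lᵀ = C →
        |(1 / (n : ℝ)) * L.trace - (1 - dC C / 4)| ≤ c * frobNorm (C - 1) ^ 3 := by
  have hn' : (1:ℝ) ≤ (n:ℝ) := by exact_mod_cast hn
  have hn0 : (0:ℝ) < (n:ℝ) := lt_of_lt_of_le one_pos hn'
  have h16 : (1:ℝ) ≤ 16 ^ n := one_le_pow₀ (by norm_num)
  have h4 : (1:ℝ) ≤ 4 ^ n := one_le_pow₀ (by norm_num)
  have h416 : ∀ m : ℕ, ((4:ℝ)^m)^2 = 16^m := by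
    intro m; rw [← pow_mul, mul_comm, pow_mul]; norm_num
  have h64 : (4:ℝ)^n * 16^n = 64^n := by rw [← mul_pow]; norm_num
  set D : ℝ := 16 * ((n:ℝ)+1) * 16 ^ n with hD
  have hDpos : 0 < D := by positivity
  have hD32 : 32 ≤ D := by nlinarith
  set K1 : ℝ := (n:ℝ) * (4*(n:ℝ)*16^n)^2 with hK1
  set K2 : ℝ := (n:ℝ)^2 * (3*4^n*(8*(n:ℝ)*64^n + 4*(n:ℝ)*16^n)) with hK2
  have hK1nn : 0 ≤ K1 := by positivity
  have hK2nn : 0 ≤ K2 := by positivity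
  refine ⟨3 / D, by positivity, K1 + K2 + 1, by positivity, ?_⟩
  intro C hpd hdiagC hlt L hlow hLpos hfac
  set ε : ℝ := frobNorm (C - 1) with hεdef
  have hε0 : 0 ≤ ε := Real.sqrt_nonneg _
  have hδ1 : 3 / D ≤ 1 := by rw [div_le_one hDpos]; linarith
  have hε1 : ε ≤ 1 := le_trans hlt.le hδ1
  have hnum2 : 4 * ε * (n:ℝ) * 16^n ≤ 3 := by
    have h1 : 4 * (n:ℝ) * 16^n ≤ D := by nlinarith
    have h2 : ε * (4 * (n:ℝ) * 16^n) ≤ (3/D) * D :=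
      mul_le_mul hlt.le h1 (by positivity) (by positivity)
    rw [div_mul_cancel₀ _ (ne_of_gt hDpos)] at h2
    linarith
  have hε332 : ε ≤ 3/32 := le_trans hlt.le (by
    apply div_le_div_of_nonneg_left (by norm_num) (by norm_num) hD32)
  have hnum3 : 4 * (n:ℝ) * 16^n * ε^2 ≤ 3/4 := by nlinarith
  have hε2 : ε^2 = ∑ i, ∑ j, ((C - 1) i j)^2 :=
    Real.sq_sqrt (Finset.sum_nonneg fun _ _ => Finset.sum_nonneg fun _ _ => sq_nonneg _)
  have hC1 : ∀ i j : Fin n, i ≠ j → (C - 1) i j = C i j := by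
    intro i j h; simp [Matrix.sub_apply, Matrix.one_apply, h]
  have hC1d : ∀ i, (C - 1) i i = 0 := by
    intro i; simp [Matrix.sub_apply, hdiagC i]
  have habsC : ∀ i j : Fin n, i ≠ j → |C i j| ≤ ε := by
    intro i j h
    have h1 : (C i j)^2 ≤ ε^2 := by
      rw [hε2]
      calc (C i j)^2 = ((C-1) i j)^2 := by rw [hC1 i j h]
        _ ≤ ∑ j', ((C-1) i j')^2 :=
            Finset.single_le_sum (f := fun j' => ((C-1) i j')^2)
              (fun _ _ => sq_nonneg _) (Finset.mem_univ j)
        _ ≤ ∑ i', ∑ j', ((C-1) i' j')^2 :=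
            Finset.single_le_sum (f := fun i' => ∑ j', ((C-1) i' j')^2)
              (fun _ _ => Finset.sum_nonneg fun _ _ => sq_nonneg _) (Finset.mem_univ i)
    calc |C i j| = Real.sqrt ((C i j)^2) := (Real.sqrt_sq_eq_abs _).symm
      _ ≤ Real.sqrt (ε^2) := Real.sqrt_le_sqrt h1
      _ = ε := Real.sqrt_sq hε0
  have hmul : ∀ i j : Fin n, C i j = ∑ k, L i k * L j k := by
    intro i j; rw [← hfac]; simp [Matrix.mul_apply, Matrix.transpose_apply]
  have hCsymm : ∀ i j : Fin n, C j i = C i j := by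
    intro i j; rw [hmul, hmul]; exact Finset.sum_congr rfl fun k _ => mul_comm _ _
  set s : Fin n → ℝ := fun i => ∑ k ∈ Finset.Iio i, (L i k)^2 with hsdef
  have hsval : ∀ i, s i = ∑ k ∈ Finset.Iio i, (L i k)^2 := fun i => rfl
  have hrow : ∀ i, s i + (L i i)^2 = 1 := by
    intro i
    have h1 := hmul i i
    rw [hdiagC i, split_sum i (fun k => L i k * L i k)] at h1
    have h2 : ∑ k ∈ Finset.Ioi i, L i k * L i k = 0 :=
      Finset.sum_eq_zero fun k hk => by rw [hlow i k (Finset.mem_Ioi.mp hk), zero_mul]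
    have h3 : s i = ∑ k ∈ Finset.Iio i, L i k * L i k := by
      rw [hsval]; exact Finset.sum_congr rfl fun k _ => sq (L i k)
    rw [h2, add_zero] at h1
    rw [h3, sq]; linarith
  have hs0 : ∀ i, 0 ≤ s i := fun i =>
    Finset.sum_nonneg fun _ _ => sq_nonneg _
  have hL1 : ∀ i, L i i ≤ 1 := by intro i; nlinarith [hrow i, hs0 i, hLpos i]
  have hexp : ∀ i j : Fin n, j < i →
      C i j = L i j * L j j + ∑ k ∈ Finset.Iio j, L i k * L j k := by
    intro i j hji
    have h1 := hmul i j
    rw [split_sum j (fun k => L i k * L j k)] at h1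
    have h2 : ∑ k ∈ Finset.Ioi j, L i k * L j k = 0 :=
      Finset.sum_eq_zero fun k hk => by rw [hlow j k (Finset.mem_Ioi.mp hk), mul_zero]
    rw [h2, add_zero] at h1
    linarith
  have hsb' : ∀ j : Fin n, (∀ k : Fin n, k < j → |L j k| ≤ 2 * 4^(k:ℕ) * ε) →
      s j ≤ 4 * n * 16^n * ε^2 := by
    intro j hb
    have h1 : s j ≤ ∑ _k ∈ Finset.Iio j, 4 * 16^n * ε^2 := by
      rw [hsval]
      refine Finset.sum_le_sum ?_
      intro k hk
      have hk' := Finset.mem_Iio.mp hk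
      have h2 := hb k hk'
      have h3 : (L j k)^2 ≤ (2 * 4^(k:ℕ) * ε)^2 := by
        rw [← sq_abs]; exact pow_le_pow_left₀ (abs_nonneg _) h2 2
      have h4 : ((4:ℝ))^(k:ℕ) ≤ 4^n := pow_le_pow_right₀ (by norm_num) (le_of_lt k.isLt)
      have h5 : ((4:ℝ)^(k:ℕ))^2 ≤ 16^n := by rw [← h416 n]; exact pow_le_pow_left₀ (by positivity) h4 2
      calc (L j k)^2 ≤ (2*4^(k:ℕ)*ε)^2 := h3
        _ = 4 * ((4:ℝ)^(k:ℕ))^2 * ε^2 := by ring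
        _ ≤ 4 * 16^n * ε^2 := mul_le_mul_of_nonneg_right (by linarith) (sq_nonneg ε)
    rw [Finset.sum_const, nsmul_eq_mul] at h1
    have h6 := card_Iio_le j
    have h7 : (0:ℝ) ≤ 4 * 16^n * ε^2 := by positivity
    linarith [mul_le_mul_of_nonneg_right h6 h7]
  have hhalf : ∀ j : Fin n, s j ≤ 3/4 → 1/2 ≤ L j j := by
    intro j h; nlinarith [hrow j, hLpos j]
  have key : ∀ m : ℕ, ∀ j i : Fin n, (j:ℕ) < m → j < i → |L i j| ≤ 2 * 4^(j:ℕ) * ε := by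
    intro m
    induction m with
    | zero => intro j i hj; exact absurd hj (Nat.not_lt_zero _)
    | succ m ih =>
      intro j i hjm hji
      by_cases hc : (j:ℕ) < m
      · exact ih j i hc hji
      have hbcol : ∀ k i' : Fin n, k < j → k < i' → |L i' k| ≤ 2*4^(k:ℕ)*ε := by
        intro k i' hk hki'
        exact ih k i' (by have := Fin.lt_def.mp hk; omega) hki'
      have hsj : s j ≤ 4*n*16^n*ε^2 := hsb' j (fun k hk => hbcol k j hk hk)
      have hLjj : 1/2 ≤ L j j := hhalf j (le_trans hsj hnum3)
      have hCij := hexp i j hji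
      have hb1 : |∑ k ∈ Finset.Iio j, L i k * L j k| ≤
          ∑ k ∈ Finset.Iio j, 4 * (16:ℝ)^(k:ℕ) * ε^2 := by
        refine le_trans (Finset.abs_sum_le_sum_abs _ _) (Finset.sum_le_sum ?_)
        intro k hk
        have hk' := Finset.mem_Iio.mp hk
        have e1 := hbcol k i hk' (hk'.trans hji)
        have e2 := hbcol k j hk' hk'
        calc |L i k * L j k| = |L i k| * |L j k| := abs_mul _ _
          _ ≤ (2*4^(k:ℕ)*ε) * (2*4^(k:ℕ)*ε) := mul_le_mul e1 e2 (abs_nonneg _) (by positivity)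
          _ = 4 * ((4:ℝ)^(k:ℕ))^2 * ε^2 := by ring
          _ = 4 * 16^(k:ℕ) * ε^2 := by rw [h416]
      have hb2 : ∑ k ∈ Finset.Iio j, 4 * (16:ℝ)^(k:ℕ) * ε^2 ≤ (4^(j:ℕ) - 1) * ε := by
        rcases Nat.eq_zero_or_pos (j:ℕ) with h0 | hpos
        · have he : Finset.Iio j = ∅ := by
            ext k; simp only [Finset.mem_Iio, Finset.notMem_empty, iff_false]
            intro hk; have := Fin.lt_def.mp hk; omega
          rw [he, h0]; simp
        · have hterm : ∀ k ∈ Finset.Iio j, 4 * (16:ℝ)^(k:ℕ) * ε^2 ≤ 4 * 16^n * ε^2 := by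
            intro k _
            have h4' : (16:ℝ)^(k:ℕ) ≤ 16^n := pow_le_pow_right₀ (by norm_num) (le_of_lt k.isLt)
            nlinarith [sq_nonneg ε]
          have hsum := Finset.sum_le_card_nsmul _ _ _ hterm
          rw [nsmul_eq_mul] at hsum
          have h6 := card_Iio_le j
          have h7 : (0:ℝ) ≤ 4 * 16^n * ε^2 := by positivity
          have h8 : (4:ℝ) ≤ 4^(j:ℕ) := by
            calc (4:ℝ) = 4^1 := (pow_one 4).symm
              _ ≤ 4^(j:ℕ) := pow_le_pow_right₀ (by norm_num) hpos
          have h9 : ((Finset.Iio j).card : ℝ) * (4 * 16^n * ε^2) ≤ (n:ℝ) * (4 * 16^n * ε^2) :=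
            mul_le_mul_of_nonneg_right h6 h7
          nlinarith [hε0]
      have habs : |L i j| * L j j = |L i j * L j j| := by
        rw [abs_mul, abs_of_nonneg (by linarith : (0:ℝ) ≤ L j j)]
      have hfin : |L i j * L j j| ≤ ε + (4^(j:ℕ)-1)*ε := by
        have heq : L i j * L j j = C i j - ∑ k ∈ Finset.Iio j, L i k * L j k := by
          linarith [hCij]
        rw [heq, sub_eq_add_neg]
        refine le_trans (abs_add_le _ _) ?_
        rw [abs_neg]
        exact add_le_add (habsC i j (ne_of_gt hji)) (le_trans hb1 hb2)
      have h2 : |L i j| * (1/2) ≤ |L i j| * L j j :=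
        mul_le_mul_of_nonneg_left hLjj (abs_nonneg _)
      linarith [habs ▸ h2]
  have hkey : ∀ j i : Fin n, j < i → |L i j| ≤ 2*4^(j:ℕ)*ε := fun j i h => key n j i j.isLt h
  have hkeyn : ∀ j i : Fin n, j < i → |L i j| ≤ 2*4^n*ε := by
    intro j i h
    refine le_trans (hkey j i h) ?_
    have h4' : ((4:ℝ))^(j:ℕ) ≤ 4^n := pow_le_pow_right₀ (by norm_num) (le_of_lt j.isLt)
    nlinarith [hε0]
  have hsB : ∀ i, s i ≤ 4*n*16^n*ε^2 := fun i => hsb' i (fun k hk => hkey k i hk)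
  have hs34 : ∀ i, s i ≤ 3/4 := fun i => le_trans (hsB i) hnum3
  have hLd : ∀ i, |L i i - 1| ≤ s i := by
    intro i; rw [abs_le]; constructor <;> nlinarith [hrow i, hLpos i, hL1 i, hs0 i]
  have hA : ∀ i, |L i i - 1 + s i / 2| ≤ (s i)^2 := by
    intro i; rw [abs_le]; constructor
    · nlinarith [hrow i, hLpos i, hs34 i, hs0 i, sq_nonneg (2*(L i i) - 2 + s i)]
    · nlinarith [hrow i, hLpos i, hs34 i, hs0 i, sq_nonneg (L i i - (1 - s i/2))]
  -- the sum of squared strict lower-triangular entries of C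
  set TC : ℝ := ∑ i, ∑ j ∈ Finset.Iio i, (C i j)^2 with hTCdef
  have hTC : ε^2 = 2 * TC := by
    rw [hε2]
    have h1 : ∀ i : Fin n, ∑ j, ((C-1) i j)^2 =
        (∑ j ∈ Finset.Iio i, (C i j)^2) + ∑ j ∈ Finset.Ioi i, (C i j)^2 := by
      intro i
      rw [split_sum i (fun j => ((C-1) i j)^2), hC1d i]
      have e1 : ∑ j ∈ Finset.Iio i, ((C-1) i j)^2 = ∑ j ∈ Finset.Iio i, (C i j)^2 :=
        Finset.sum_congr rfl fun j hj => by rw [hC1 i j (ne_of_gt (Finset.mem_Iio.mp hj))]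
      have e2 : ∑ j ∈ Finset.Ioi i, ((C-1) i j)^2 = ∑ j ∈ Finset.Ioi i, (C i j)^2 :=
        Finset.sum_congr rfl fun j hj => by rw [hC1 i j (ne_of_lt (Finset.mem_Ioi.mp hj))]
      rw [e1, e2]; ring
    rw [Finset.sum_congr rfl (fun i _ => h1 i), Finset.sum_add_distrib]
    have h2 : ∑ i, ∑ j ∈ Finset.Ioi i, (C i j)^2 = ∑ j, ∑ i ∈ Finset.Iio j, (C i j)^2 :=
      swap_sum _
    have h3 : ∑ j, ∑ i ∈ Finset.Iio j, (C i j)^2 = TC :=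
      Finset.sum_congr rfl fun a _ => Finset.sum_congr rfl fun b _ => by rw [hCsymm a b]
    rw [h2, h3, hTCdef]; ring
  have htrace : L.trace = ∑ i, L i i := by simp [Matrix.trace, Matrix.diag]
  -- first error term
  have hSsum : |(∑ i, L i i) - n + (∑ i, s i)/2| ≤ K1 * ε^4 := by
    have h1 : (∑ i, L i i) - n + (∑ i, s i)/2 = ∑ i, (L i i - 1 + s i / 2) := by
      rw [Finset.sum_add_distrib, Finset.sum_sub_distrib, Finset.sum_const, Finset.card_univ,
        Fintype.card_fin, nsmul_eq_mul, mul_one, ← Finset.sum_div]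
    rw [h1]
    refine le_trans (Finset.abs_sum_le_sum_abs _ _) ?_
    have h2 : ∀ i : Fin n, |L i i - 1 + s i / 2| ≤ (4*(n:ℝ)*16^n)^2 * ε^4 := by
      intro i
      refine le_trans (hA i) ?_
      have := pow_le_pow_left₀ (hs0 i) (hsB i) 2
      calc (s i)^2 ≤ (4*(n:ℝ)*16^n*ε^2)^2 := this
        _ = (4*(n:ℝ)*16^n)^2 * ε^4 := by ring
    refine le_trans (Finset.sum_le_sum fun i _ => h2 i) ?_
    rw [Finset.sum_const, Finset.card_univ, Fintype.card_fin, nsmul_eq_mul, hK1]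
    ring_nf
    exact le_refl _
  -- per-pair bound
  have hpair : ∀ i j : Fin n, j < i →
      |(L i j)^2 - (C i j)^2| ≤ 3*4^n*(8*(n:ℝ)*64^n + 4*(n:ℝ)*16^n) * ε^3 := by
    intro i j hji
    have hL' := hkeyn j i hji
    have hC' := habsC i j (ne_of_gt hji)
    have hdiff : |C i j - L i j| ≤ (8*(n:ℝ)*64^n + 4*(n:ℝ)*16^n) * ε^2 := by
      have hCij := hexp i j hji
      have h1 : C i j - L i j = L i j * (L j j - 1) + ∑ k ∈ Finset.Iio j, L i k * L j k := by
        rw [hCij]; ring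
      rw [h1]
      refine le_trans (abs_add_le _ _) ?_
      have h2 : |L i j * (L j j - 1)| ≤ (2*4^n*ε) * (4*(n:ℝ)*16^n*ε^2) := by
        rw [abs_mul]
        refine mul_le_mul hL' ?_ (abs_nonneg _) (by positivity)
        exact le_trans (hLd j) (hsB j)
      have h3 : |∑ k ∈ Finset.Iio j, L i k * L j k| ≤ (n:ℝ) * (4 * 16^n * ε^2) := by
        refine le_trans (Finset.abs_sum_le_sum_abs _ _) ?_
        have hterm : ∀ k ∈ Finset.Iio j, |L i k * L j k| ≤ 4*16^n*ε^2 := by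
          intro k hk
          have hk' := Finset.mem_Iio.mp hk
          have e1 := hkeyn k i (hk'.trans hji)
          have e2 := hkeyn k j hk'
          rw [abs_mul]
          calc |L i k| * |L j k| ≤ (2*4^n*ε)*(2*4^n*ε) :=
                mul_le_mul e1 e2 (abs_nonneg _) (by positivity)
            _ = 4*((4:ℝ)^n)^2*ε^2 := by ring
            _ = 4*16^n*ε^2 := by rw [h416]
        refine le_trans (Finset.sum_le_card_nsmul _ _ _ hterm) ?_
        rw [nsmul_eq_mul]
        exact mul_le_mul_of_nonneg_right (card_Iio_le j) (by positivity)
      have h4 : (2*4^n*ε) * (4*(n:ℝ)*16^n*ε^2) ≤ 8*(n:ℝ)*64^n*ε^2 := by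
        have he1 : (2*4^n*ε) * (4*(n:ℝ)*16^n*ε^2) = 8*(n:ℝ)*((4:ℝ)^n*16^n)*ε^3 := by ring
        rw [he1, h64]
        have he2 : ε^3 ≤ ε^2 := pow_le_pow_of_le_one hε0 hε1 (by norm_num)
        have : (0:ℝ) ≤ 8*(n:ℝ)*64^n := by positivity
        nlinarith
      nlinarith [h2, h3, h4]
    have hsum' : |L i j + C i j| ≤ 3*4^n*ε := by
      refine le_trans (abs_add_le _ _) ?_
      nlinarith [hL', hC', hε0, h4]
    have hid : (L i j)^2 - (C i j)^2 = (L i j + C i j) * (L i j - C i j) := by ring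
    rw [hid, abs_mul, abs_sub_comm (L i j) (C i j)]
    calc |L i j + C i j| * |C i j - L i j|
        ≤ (3*4^n*ε) * ((8*(n:ℝ)*64^n+4*(n:ℝ)*16^n)*ε^2) :=
          mul_le_mul hsum' hdiff (abs_nonneg _) (by positivity)
      _ = 3*4^n*(8*(n:ℝ)*64^n + 4*(n:ℝ)*16^n) * ε^3 := by ring
  -- second error term
  have hST : |(∑ i, s i) - TC| ≤ K2 * ε^3 := by
    have h1 : (∑ i, s i) - TC = ∑ i, ∑ j ∈ Finset.Iio i, ((L i j)^2 - (C i j)^2) := by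
      rw [hTCdef, ← Finset.sum_sub_distrib]
      exact Finset.sum_congr rfl fun i _ => by
        rw [hsval, Finset.sum_sub_distrib]
    rw [h1]
    refine le_trans (Finset.abs_sum_le_sum_abs _ _) ?_
    have h2 : ∀ i : Fin n, |∑ j ∈ Finset.Iio i, ((L i j)^2 - (C i j)^2)| ≤
        (n:ℝ) * (3*4^n*(8*(n:ℝ)*64^n + 4*(n:ℝ)*16^n) * ε^3) := by
      intro i
      refine le_trans (Finset.abs_sum_le_sum_abs _ _) ?_
      have hterm : ∀ j ∈ Finset.Iio i, |(L i j)^2 - (C i j)^2| ≤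
          3*4^n*(8*(n:ℝ)*64^n + 4*(n:ℝ)*16^n) * ε^3 :=
        fun j hj => hpair i j (Finset.mem_Iio.mp hj)
      refine le_trans (Finset.sum_le_card_nsmul _ _ _ hterm) ?_
      rw [nsmul_eq_mul]
      exact mul_le_mul_of_nonneg_right (card_Iio_le i) (by positivity)
    refine le_trans (Finset.sum_le_sum fun i _ => h2 i) ?_
    rw [Finset.sum_const, Finset.card_univ, Fintype.card_fin, nsmul_eq_mul, hK2]
    ring_nf
    exact le_refl _
  -- final assembly
  have hdc : dC C = 1/(n:ℝ) * ε^2 := rfl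
  rw [htrace]
  have hre : 1/(n:ℝ) * (∑ i, L i i) - (1 - dC C/4) =
      (1/(n:ℝ)) * ((∑ i, L i i) - n + ε^2/4) := by
    rw [hdc]; field_simp; ring
  rw [hre, abs_mul, abs_of_pos (by positivity : (0:ℝ) < 1/(n:ℝ))]
  have hdec : (∑ i, L i i) - (n:ℝ) + ε^2/4 =
      ((∑ i, L i i) - n + (∑ i, s i)/2) + (TC - (∑ i, s i))/2 := by
    rw [hTC]; ring
  have hinner : |(∑ i, L i i) - (n:ℝ) + ε^2/4| ≤ (K1 + K2) * ε^3 := by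
    rw [hdec]
    refine le_trans (abs_add_le _ _) ?_
    have hquarter : |(TC - (∑ i, s i))/2| ≤ K2 * ε^3 / 2 := by
      rw [abs_div, abs_sub_comm]
      have : |(2:ℝ)| = 2 := by norm_num
      rw [this]
      linarith [hST]
    have h14 : K1 * ε^4 ≤ K1 * ε^3 := by
      have := pow_le_pow_of_le_one hε0 hε1 (by norm_num : 3 ≤ 4)
      nlinarith
    have hK2e : (0:ℝ) ≤ K2 * ε^3 := by positivity
    linarith [hSsum, hquarter, h14]
  calc (1/(n:ℝ)) * |(∑ i, L i i) - (n:ℝ) + ε^2/4|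
      ≤ 1 * |(∑ i, L i i) - (n:ℝ) + ε^2/4| := by
        refine mul_le_mul_of_nonneg_right ?_ (abs_nonneg _)
        rw [div_le_one hn0]; exact hn'
    _ = |(∑ i, L i i) - (n:ℝ) + ε^2/4| := one_mul _
    _ ≤ (K1 + K2) * ε^3 := hinner
    _ ≤ (K1 + K2 + 1) * ε^3 := by nlinarith [pow_nonneg hε0 3]
end

section
/- Let n ≥ 2, ρ ∈ (−1/(n−1), 1), let C be the n×n equicorrelation matrix with C_{ii} = 1 and C_{ij} = ρ for i ≠ j, and let L be the unique lower triangular matrix with positive diagonal entries satisfying L Lᵀ = C. Then for each k ∈ {1,…,n}, L_{kk} = √(1 − (k−1)ρ² / (1 + (k−2)ρ)), and consequently (1/n)·tr(L) = (1/n)·Σ_{k=1}^n √(1 − (k−1)ρ² / (1 + (k−2)ρ)). -/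
/-!
Write `s j = gramPrefix ρ j = j ρ² / (1 + (j - 1) ρ)`. By strong induction on `j`, column `j`
of the Cholesky factor is constant below the diagonal, equal to `(ρ - s j) / √(1 - s j)`, and
`L j j = √(1 - s j)`. Indeed, by the induction hypothesis `∑_{m<j} L k m L j m` (for `k ≥ j`)
is the sum of the squares of the earlier subdiagonal values, which telescopes to `s j` since
`s (j + 1) = s j + (ρ - s j)² / (1 - s j)`; the `(k, j)` entry of `L Lᵀ = C` then reads
`s j + L k j L j j = C k j`.
-/

open Matrix Finset

namespace Equicorrelation

noncomputable def gramPrefix (ρ : ℝ) (j : ℕ) : ℝ := j * ρ ^ 2 / (1 + (j - 1) * ρ)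

noncomputable def subdiag (ρ : ℝ) (j : ℕ) : ℝ := (ρ - gramPrefix ρ j) / √(1 - gramPrefix ρ j)

theorem one_add_mul_pos_of_le {ρ a x : ℝ} (hρ : ρ < 1) (ha : 0 < 1 + a * ρ) (hx : -1 ≤ x)
    (hxa : x ≤ a) : 0 < 1 + x * ρ := by
  rcases le_or_gt 0 ρ with h | h <;> nlinarith

theorem one_add_pred_mul_pos {n : ℕ} (hn : 0 < n) {ρ : ℝ} (hρ : -(1 / ((n : ℝ) - 1)) < ρ) :
    0 < 1 + ((n : ℝ) - 1) * ρ := by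
  obtain rfl | hn2 := (Nat.succ_le_of_lt hn).eq_or_lt
  · simp
  · have : (0 : ℝ) < n - 1 := by
      rw [sub_pos]; exact_mod_cast hn2
    rw [neg_lt, lt_div_iff₀ this] at hρ
    linarith

section Algebra

variable {ρ : ℝ} {j : ℕ}

theorem one_sub_gramPrefix (hj : 1 + ((j : ℝ) - 1) * ρ ≠ 0) :
    1 - gramPrefix ρ j = (1 - ρ) * (1 + j * ρ) / (1 + (j - 1) * ρ) := by
  rw [gramPrefix, eq_div_iff hj, sub_mul, div_mul_cancel₀ _ hj]; ring

theorem sub_gramPrefix (hj : 1 + ((j : ℝ) - 1) * ρ ≠ 0) :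
    ρ - gramPrefix ρ j = ρ * (1 - ρ) / (1 + (j - 1) * ρ) := by
  rw [gramPrefix, eq_div_iff hj, sub_mul, div_mul_cancel₀ _ hj]; ring

theorem gramPrefix_succ (hρ : ρ < 1) (hj : 0 < 1 + ((j : ℝ) - 1) * ρ)
    (hj' : 0 < 1 + (j : ℝ) * ρ) :
    gramPrefix ρ (j + 1) = gramPrefix ρ j + (ρ - gramPrefix ρ j) ^ 2 / (1 - gramPrefix ρ j) := by
  rw [one_sub_gramPrefix hj.ne', sub_gramPrefix hj.ne', gramPrefix, gramPrefix]
  push_cast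
  rw [add_sub_cancel_right, div_pow, div_div_div_eq, div_add_div _ _ hj.ne' (by positivity),
    div_eq_div_iff hj'.ne' (by positivity)]
  ring

theorem sum_range_subdiag_sq (hρ : ρ < 1) (hj : 0 < 1 + ((j : ℝ) - 1) * ρ) :
    ∑ m ∈ range j, subdiag ρ m ^ 2 = gramPrefix ρ j := by
  induction j with
  | zero => simp [gramPrefix]
  | succ j ih =>
    push_cast at hj
    rw [add_sub_cancel_right] at hj
    have hj' : 0 < 1 + ((j : ℝ) - 1) * ρ :=
      one_add_mul_pos_of_le hρ hj (by linarith [j.cast_nonneg (α := ℝ)]) (by linarith)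
    have hpos : 0 < 1 - gramPrefix ρ j := by
      rw [one_sub_gramPrefix hj'.ne']
      have : 0 < 1 - ρ := by linarith
      positivity
    rw [sum_range_succ, ih hj', subdiag, div_pow, Real.sq_sqrt hpos.le,
      gramPrefix_succ hρ hj' hj]

end Algebra

theorem mul_transpose_apply_of_lowerTriangular {ι R : Type*} [Fintype ι] [LinearOrder ι]
    [LocallyFiniteOrderBot ι] [CommSemiring R] {L : Matrix ι ι R}
    (hL : ∀ i j, i < j → L i j = 0) (k j : ι) :
    (L * Lᵀ) k j = ∑ m ∈ Iio j, L k m * L j m + L k j * L j j := by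
  rw [mul_apply, ← sum_subset (subset_univ (Iic j)), Iic_eq_cons_Iio, sum_cons, add_comm]
  · simp only [transpose_apply]
  · intro m _ hm
    rw [transpose_apply, hL j m (not_le.1 (mem_Iic.not.1 hm)), mul_zero]

theorem cholesky_column {n : ℕ} {ρ : ℝ} {L : Matrix (Fin n) (Fin n) ℝ}
    (hLtri : ∀ i j : Fin n, i < j → L i j = 0) (hLdiag : ∀ i, 0 < L i i)
    (hchol : L * Lᵀ = of fun i j : Fin n => if i = j then (1 : ℝ) else ρ)
    (hρ : ρ < 1) (hρn : 0 < 1 + ((n : ℝ) - 1) * ρ) (j : Fin n) :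
    L j j = √(1 - gramPrefix ρ j) ∧ ∀ k, j < k → L k j = subdiag ρ j := by
  induction j using WellFoundedLT.induction with
  | _ j ih =>
    have hj : 0 < 1 + ((j : ℝ) - 1) * ρ := by
      refine one_add_mul_pos_of_le hρ hρn (by linarith [j.val.cast_nonneg (α := ℝ)]) ?_
      have : (j : ℝ) + 1 ≤ n := by exact_mod_cast j.isLt
      linarith
    have hentry : ∀ k, j ≤ k → (L * Lᵀ) k j = gramPrefix ρ j + L k j * L j j := by
      intro k hk
      rw [mul_transpose_apply_of_lowerTriangular hLtri, ← sum_range_subdiag_sq hρ hj,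
        ← Nat.Iio_eq_range, ← Fin.map_valEmbedding_Iio, sum_map]
      congr 1
      refine sum_congr rfl fun m hm => ?_
      have hmj := mem_Iio.1 hm
      rw [(ih m hmj).2 k (hmj.trans_le hk), (ih m hmj).2 j hmj, sq]
      rfl
    have hdiag : L j j ^ 2 = 1 - gramPrefix ρ j := by
      have := hentry j le_rfl
      rw [hchol, of_apply, if_pos rfl] at this
      linarith
    refine ⟨by rw [← hdiag, Real.sqrt_sq (hLdiag j).le], fun k hk => ?_⟩
    have := hentry k hk.le
    rw [hchol, of_apply, if_neg hk.ne'] at this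
    rw [subdiag, ← hdiag, Real.sqrt_sq (hLdiag j).le, eq_div_iff (hLdiag j).ne']
    linarith

end Equicorrelation

theorem stmt_16_general {n : ℕ} (ρ : ℝ)
    (hρ1 : -(1 / ((n : ℝ) - 1)) < ρ) (hρ2 : ρ < 1)
    (C : Matrix (Fin n) (Fin n) ℝ)
    (hC : C = Matrix.of (fun i j : Fin n => if i = j then (1 : ℝ) else ρ))
    (L : Matrix (Fin n) (Fin n) ℝ)
    (hLtri : ∀ i j : Fin n, i < j → L i j = 0)
    (hLdiag : ∀ i : Fin n, 0 < L i i)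
    (hchol : L * Lᵀ = C) :
    (∀ k : Fin n,
      L k k = Real.sqrt (1 - ((k : ℕ) : ℝ) * ρ ^ 2 / (1 + (((k : ℕ) : ℝ) - 1) * ρ))) ∧
    (1 / (n : ℝ)) * L.trace
      = (1 / (n : ℝ)) * ∑ k : Fin n,
          Real.sqrt (1 - ((k : ℕ) : ℝ) * ρ ^ 2 / (1 + (((k : ℕ) : ℝ) - 1) * ρ)) := by
  have hdiag : ∀ k : Fin n,
      L k k = Real.sqrt (1 - ((k : ℕ) : ℝ) * ρ ^ 2 / (1 + (((k : ℕ) : ℝ) - 1) * ρ)) := fun k =>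
    (Equicorrelation.cholesky_column hLtri hLdiag (hchol.trans hC) hρ2
      (Equicorrelation.one_add_pred_mul_pos k.pos hρ1) k).1
  exact ⟨hdiag, by simp only [trace, diag_apply, hdiag]⟩

/-- **Cholesky value for the equicorrelation matrix.** For `n ≥ 2`,
`ρ ∈ (−1/(n−1), 1)` and the equicorrelation matrix `C`, the lower triangular
Cholesky factor `L` (positive diagonal, `L Lᵀ = C`) has diagonal entries
`L_{kk} = √(1 − (k−1)ρ²/(1 + (k−2)ρ))` for `k = 1, …, n` (here `k : Fin n`
corresponds to the paper's `k − 1`), and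
`(1/n)·tr(L) = (1/n)·Σ_{k=1}^n √(1 − (k−1)ρ²/(1 + (k−2)ρ))`. -/
theorem stmt_16 {n : ℕ} (hn : 2 ≤ n) (ρ : ℝ)
    (hρ1 : -(1 / ((n : ℝ) - 1)) < ρ) (hρ2 : ρ < 1)
    (C : Matrix (Fin n) (Fin n) ℝ)
    (hC : C = Matrix.of (fun i j : Fin n => if i = j then (1 : ℝ) else ρ))
    (L : Matrix (Fin n) (Fin n) ℝ)
    (hLtri : ∀ i j : Fin n, i < j → L i j = 0)
    (hLdiag : ∀ i : Fin n, 0 < L i i)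
    (hchol : L * Lᵀ = C) :
    (∀ k : Fin n,
      L k k = Real.sqrt (1 - ((k : ℕ) : ℝ) * ρ ^ 2 / (1 + (((k : ℕ) : ℝ) - 1) * ρ))) ∧
    (1 / (n : ℝ)) * L.trace
      = (1 / (n : ℝ)) * ∑ k : Fin n,
          Real.sqrt (1 - ((k : ℕ) : ℝ) * ρ ^ 2 / (1 + (((k : ℕ) : ℝ) - 1) * ρ)) :=
  stmt_16_general ρ hρ1 hρ2 C hC L hLtri hLdiag hchol
end

section
/- Let Σ ∈ ℝ^{n×n} be symmetric positive definite, let D ∈ ℝ^{n×n} be diagonal with positive diagonal entries, and let P ∈ ℝ^{n×n} be a permutation matrix. Set Σ̃ = P D Σ D Pᵀ, and let C and C̃ denote the correlation matrices of Σ and Σ̃ respectively (i.e. C = Λ_σ^{-1} Σ Λ_σ^{-1} with Λ_σ the diagonal matrix of square roots of the diagonal of Σ, and analogously for Σ̃). Then C̃ = P C Pᵀ, and consequently the multiset of eigenvalues of C̃ equals that of C, so the OASIS maximal average correlation (1/n)·Σ_i λ_i^{1/2} computed from Σ̃ equals that computed from Σ. That is, the OASIS identification value is invariant to reordering and rescaling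 of the variables. -/
open Matrix

/-! The correlation matrix only sees the entries `S i j / (√(S i i) √(S j j))`, which are unchanged
by a positive rescaling of the variables and merely move around under a permutation of them.
Conjugation by a permutation matrix preserves the characteristic polynomial, and the eigenvalues
of a Hermitian matrix (listed in decreasing order) are determined by it. -/

namespace Matrix

variable {m n R : Type*} [Fintype n] [DecidableEq n]

lemma permMatrix_mul_mul_transpose [NonAssocSemiring R] (σ : Equiv.Perm n) (M : Matrix n n R) :
    σ.permMatrix R * M * (σ.permMatrix R)ᵀ = M.submatrix σ σ := by
  rw [transpose_permMatrix, PEquiv.toMatrix_toPEquiv_mul, PEquiv.mul_toMatrix_toPEquiv]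
  rfl

lemma charpoly_submatrix_equiv [CommRing R] (σ : n ≃ n) (M : Matrix n n R) :
    (M.submatrix σ σ).charpoly = M.charpoly :=
  charpoly_reindex σ.symm M

noncomputable def corrMatrix (S : Matrix n n ℝ) : Matrix n n ℝ :=
  (diagonal fun i => √(S i i))⁻¹ * S * (diagonal fun i => √(S i i))⁻¹

lemma inv_diagonal_of_ne_zero {K : Type*} [Field K] {v : n → K} (hv : ∀ i, v i ≠ 0) :
    (diagonal v)⁻¹ = diagonal v⁻¹ :=
  inv_eq_right_inv <| by simp [diagonal_mul_diagonal, hv]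

-- If some `S i i ≤ 0`, the diagonal matrix is singular and its junk inverse `0` gives `corrMatrix S = 0`.
lemma corrMatrix_apply {S : Matrix n n ℝ} (hS : ∀ i, 0 < S i i) (i j : n) :
    corrMatrix S i j = S i j / (√(S i i) * √(S j j)) := by
  rw [corrMatrix, inv_diagonal_of_ne_zero fun k => (Real.sqrt_pos.2 (hS k)).ne']
  simp only [diagonal_mul, mul_diagonal, Pi.inv_apply]
  field_simp

lemma corrMatrix_submatrix [Fintype m] [DecidableEq m] {S : Matrix n n ℝ} (hS : ∀ i, 0 < S i i)
    (f : m → n) : corrMatrix (S.submatrix f f) = (corrMatrix S).submatrix f f := by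
  ext i j
  simp only [corrMatrix_apply hS, submatrix_apply,
    corrMatrix_apply (S := S.submatrix f f) fun k => hS (f k)]

lemma diagonal_mul_mul_diagonal_diag_pos {S : Matrix n n ℝ} (hS : ∀ i, 0 < S i i) {d : n → ℝ}
    (hd : ∀ i, 0 < d i) (i : n) : 0 < (diagonal d * S * diagonal d) i i := by
  simpa only [diagonal_mul, mul_diagonal] using mul_pos (mul_pos (hd i) (hS i)) (hd i)

lemma corrMatrix_diagonal_mul_mul_diagonal {S : Matrix n n ℝ} (hS : ∀ i, 0 < S i i) {d : n → ℝ}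
    (hd : ∀ i, 0 < d i) : corrMatrix (diagonal d * S * diagonal d) = corrMatrix S := by
  have hentry (i j : n) : (diagonal d * S * diagonal d) i j = d i * S i j * d j := by
    simp only [diagonal_mul, mul_diagonal]
  have hsqrt (i : n) : √(d i * S i i * d i) = d i * √(S i i) := by
    rw [mul_right_comm, ← sq, Real.sqrt_mul (sq_nonneg _), Real.sqrt_sq (hd i).le]
  ext i j
  simp only [corrMatrix_apply hS, corrMatrix_apply (diagonal_mul_mul_diagonal_diag_pos hS hd),
    hentry, hsqrt]
  have := (hd i).ne'
  have := (hd j).ne'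
  field_simp

end Matrix

theorem stmt_19_general {n : ℕ}
    (S : Matrix (Fin n) (Fin n) ℝ) (hS : S.PosDef)
    (d : Fin n → ℝ) (hd : ∀ i, 0 < d i)
    (e : Equiv.Perm (Fin n))
    (P : Matrix (Fin n) (Fin n) ℝ) (hP : P = e.permMatrix ℝ)
    (S' : Matrix (Fin n) (Fin n) ℝ)
    (hS' : S' = P * (Matrix.diagonal d * S * Matrix.diagonal d) * Pᵀ)
    (Ls Ls' : Matrix (Fin n) (Fin n) ℝ)
    (hLs : Ls = Matrix.diagonal (fun i => Real.sqrt (S i i)))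
    (hLs' : Ls' = Matrix.diagonal (fun i => Real.sqrt (S' i i)))
    (C C' : Matrix (Fin n) (Fin n) ℝ)
    (hC : C = Ls⁻¹ * S * Ls⁻¹) (hC' : C' = Ls'⁻¹ * S' * Ls'⁻¹)
    (hCh : C.IsHermitian) (hC'h : C'.IsHermitian) :
    C' = P * C * Pᵀ ∧
    (∃ g : Equiv.Perm (Fin n), ∀ i, hC'h.eigenvalues i = hCh.eigenvalues (g i)) ∧
    (1 / (n : ℝ)) * ∑ i, Real.sqrt (hC'h.eigenvalues i)
      = (1 / (n : ℝ)) * ∑ i, Real.sqrt (hCh.eigenvalues i) := by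
  subst hLs hLs' hP
  have hdiag (i : Fin n) : 0 < S i i := hS.diag_pos
  have hC_corr : C = corrMatrix S := hC
  have hC'_conj : C' = e.permMatrix ℝ * C * (e.permMatrix ℝ)ᵀ := by
    rw [hC', ← corrMatrix, hS', permMatrix_mul_mul_transpose, permMatrix_mul_mul_transpose,
      corrMatrix_submatrix (diagonal_mul_mul_diagonal_diag_pos hdiag hd),
      corrMatrix_diagonal_mul_mul_diagonal hdiag hd, hC_corr]
  have heig : hC'h.eigenvalues = hCh.eigenvalues :=
    (hC'h.eigenvalues_eq_eigenvalues_iff hCh).2 <| by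
      rw [hC'_conj, permMatrix_mul_mul_transpose, charpoly_submatrix_equiv]
  exact ⟨hC'_conj, ⟨1, fun i => by rw [heig, Equiv.Perm.one_apply]⟩, by rw [heig]⟩

/-- **Order- and scale-invariance of OASIS.** Let `Σ̃ = P D Σ D Pᵀ` for a
permutation matrix `P` and a positive diagonal matrix `D`. Then the correlation
matrices satisfy `C̃ = P C Pᵀ`, the eigenvalues of `C̃` are a permutation of
those of `C`, and the OASIS value `(1/n)·Σ_i λ_i^{1/2}` computed from `Σ̃`
equals that computed from `Σ`. -/
theorem stmt_19 {n : ℕ} (hn : 1 ≤ n)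
    (S : Matrix (Fin n) (Fin n) ℝ) (hS : S.PosDef)
    (d : Fin n → ℝ) (hd : ∀ i, 0 < d i)
    (e : Equiv.Perm (Fin n))
    (P : Matrix (Fin n) (Fin n) ℝ) (hP : P = e.permMatrix ℝ)
    (S' : Matrix (Fin n) (Fin n) ℝ)
    (hS' : S' = P * (Matrix.diagonal d * S * Matrix.diagonal d) * Pᵀ)
    (Ls Ls' : Matrix (Fin n) (Fin n) ℝ)
    (hLs : Ls = Matrix.diagonal (fun i => Real.sqrt (S i i)))
    (hLs' : Ls' = Matrix.diagonal (fun i => Real.sqrt (S' i i)))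
    (C C' : Matrix (Fin n) (Fin n) ℝ)
    (hC : C = Ls⁻¹ * S * Ls⁻¹) (hC' : C' = Ls'⁻¹ * S' * Ls'⁻¹)
    (hCh : C.IsHermitian) (hC'h : C'.IsHermitian) :
    C' = P * C * Pᵀ ∧
    (∃ g : Equiv.Perm (Fin n), ∀ i, hC'h.eigenvalues i = hCh.eigenvalues (g i)) ∧
    (1 / (n : ℝ)) * ∑ i, Real.sqrt (hC'h.eigenvalues i)
      = (1 / (n : ℝ)) * ∑ i, Real.sqrt (hCh.eigenvalues i) :=
  stmt_19_general S hS d hd e P hP S' hS' Ls Ls' hLs hLs' C C' hC hC' hCh hC'h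
end
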